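/- Let G = (V,E) be a finite undirected simple graph, h a positive integer, v ∈ V, and u ∈ N_v^h(G) with s = dis_G(u,v). Then the updated h-degree of u after deleting v can be computed on the subgraph induced by N_v^h(G): d_u^h(G(V \ {v})) = d_u^h(G) − 1 − |{w ∈ N_v^{h-s}(G) : w ≠ u and dis_{G(N_v^h(G))}(u,w) > h}|. -/

import Mathlib

open SimpleGraph

variable {V : Type*} [Fintype V] [DecidableEq V]

/-- The subgraph of `G` induced by the vertex set `S`, viewed as a graph on the
same vertex type (edges are exactly the edges of `G` with both endpoints in `S`). -/
def SimpleGraph.inducedOn (G : SimpleGraph V) (S : Set V) : SimpleGraph V where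
  Adj x y := G.Adj x y ∧ x ∈ S ∧ y ∈ S
  symm := ⟨fun _ _ ⟨ha, hx, hy⟩ => ⟨ha.symm, hy, hx⟩⟩
  loopless := ⟨fun _ ⟨ha, _, _⟩ => G.irrefl ha⟩

/-- The `h`-hop neighborhood of `v` in `G`:
all vertices `u ≠ v` with `dis_G(v,u) ≤ h`. -/
def SimpleGraph.hNbhd (G : SimpleGraph V) (h : ℕ) (v : V) : Set V :=
  {u | u ≠ v ∧ G.edist v u ≤ (h : ℕ∞)}

/-- The `h`-degree of `v` in `G`: the number of vertices in its `h`-hop neighborhood. -/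
noncomputable def SimpleGraph.hDeg (G : SimpleGraph V) (h : ℕ) (v : V) : ℕ :=
  (G.hNbhd h v).ncard

/-!
Let `w` be an `h`-hop neighbour of `u`. If `dis(v,w) > h - s`, no walk of length at most `h` from
`u` to `w` passes through `v`, since it would have length at least `s + dis(v,w)`; so `w` survives
the deletion of `v`. If `dis(v,w) ≤ h - s`, every vertex `x` of such a walk splits it into pieces of
lengths `m + n ≤ h`, and `dis(v,x) ≤ min(s + m, (h - s) + n) ≤ h`; so a walk avoiding `v` lies in
`N_v^h(G)`, and `w` survives exactly when it is within `h` of `u` inside `N_v^h(G)`.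
-/

namespace SimpleGraph

variable {α : Type*} {G : SimpleGraph α} {S T : Set α} {a b x : α}

lemma inducedOn_le (G : SimpleGraph α) (S : Set α) : G.inducedOn S ≤ G :=
  fun _ _ hab => hab.1

lemma inducedOn_mono (hST : S ⊆ T) : G.inducedOn S ≤ G.inducedOn T :=
  fun _ _ hab => ⟨hab.1, hST hab.2.1, hST hab.2.2⟩

lemma exists_walk_length_le_of_edist_le {n : ℕ} (h : G.edist a b ≤ n) :
    ∃ p : G.Walk a b, p.length ≤ n := by
  obtain ⟨p, hp⟩ := exists_walk_of_edist_ne_top (h.trans_lt (ENat.natCast_lt_top n)).ne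
  exact ⟨p, by exact_mod_cast hp ▸ h⟩

lemma Walk.support_subset_of_inducedOn (p : (G.inducedOn S).Walk a b) (ha : a ∈ S) :
    ∀ x ∈ p.support, x ∈ S := by
  induction p with
  | nil => simpa using ha
  | cons hadj _ ih =>
    simp only [support_cons, List.mem_cons, forall_eq_or_imp]
    exact ⟨ha, ih hadj.2.2⟩

lemma edist_inducedOn_le_length (p : G.Walk a b) (hp : ∀ x ∈ p.support, x ∈ S) :
    (G.inducedOn S).edist a b ≤ p.length := by
  have hedges : ∀ e ∈ p.edges, e ∈ (G.inducedOn S).edgeSet := by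
    intro e
    refine Sym2.ind (fun x y he => ?_) e
    exact ⟨p.edges_subset_edgeSet he, hp x (p.fst_mem_support_of_mem_edges he),
      hp y (p.snd_mem_support_of_mem_edges he)⟩
  simpa using edist_le (p.transfer _ hedges)

lemma edist_inducedOn_le_iff (ha : a ∈ S) {n : ℕ} :
    (G.inducedOn S).edist a b ≤ n ↔
      ∃ p : G.Walk a b, p.length ≤ n ∧ ∀ x ∈ p.support, x ∈ S := by
  refine ⟨fun h => ?_, fun ⟨p, hpn, hpS⟩ => (edist_inducedOn_le_length p hpS).trans
    (by exact_mod_cast hpn)⟩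
  obtain ⟨p, hpn⟩ := exists_walk_length_le_of_edist_le h
  exact ⟨p.mapLe (inducedOn_le G S), by simpa using hpn,
    by simpa using p.support_subset_of_inducedOn ha⟩

lemma Walk.exists_edist_le_of_mem_support [DecidableEq α] (p : G.Walk a b)
    (hx : x ∈ p.support) :
    ∃ m n : ℕ, m + n = p.length ∧ G.edist a x ≤ m ∧ G.edist x b ≤ n := by
  refine ⟨(p.takeUntil x hx).length, (p.dropUntil x hx).length, ?_, edist_le _, edist_le _⟩
  rw [← length_append, take_spec]

variable {u v w : α} {h s : ℕ}

lemma Walk.edist_le_of_mem_support (p : G.Walk u w) (hp : p.length ≤ h)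
    (hu : G.edist v u = s) (hw : G.edist v w ≤ (h - s : ℕ)) (hx : x ∈ p.support) :
    G.edist v x ≤ h := by
  classical
  obtain ⟨m, n, hmn, hux, hxw⟩ := p.exists_edist_le_of_mem_support hx
  have hvx₁ : G.edist v x ≤ (s + m : ℕ) := by
    calc G.edist v x ≤ G.edist v u + G.edist u x := G.edist_triangle
      _ ≤ (s + m : ℕ) := by rw [hu, Nat.cast_add]; gcongr
  have hvx₂ : G.edist v x ≤ (h - s + n : ℕ) := by
    calc G.edist v x ≤ G.edist v w + G.edist w x := G.edist_triangle
      _ ≤ (h - s + n : ℕ) := by rw [Nat.cast_add, edist_comm (u := w)]; gcongr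
  rcases le_or_gt (s + m) h with hsm | hsm
  · exact hvx₁.trans (by exact_mod_cast hsm)
  · exact hvx₂.trans (by exact_mod_cast (by omega : h - s + n ≤ h))

lemma Walk.notMem_support_of_length_le (p : G.Walk u w) (hp : p.length ≤ h)
    (hu : G.edist u v = s) (hw : ((h - s : ℕ) : ℕ∞) < G.edist v w) : v ∉ p.support := by
  classical
  intro hv
  obtain ⟨m, n, hmn, huv, hvw⟩ := p.exists_edist_le_of_mem_support hv
  have hsm : s ≤ m := by exact_mod_cast hu ▸ huv
  have hn : h - s < n := by exact_mod_cast hw.trans_le hvw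
  omega

lemma edist_le_of_edist_le_sub (hs : G.edist u v = s) (hsh : s ≤ h)
    (hw : G.edist v w ≤ (h - s : ℕ)) : G.edist u w ≤ h :=
  calc G.edist u w ≤ G.edist u v + G.edist v w := G.edist_triangle
    _ ≤ (s + (h - s) : ℕ) := by rw [hs, Nat.cast_add]; gcongr
    _ = h := by rw [Nat.add_sub_cancel' hsh]

theorem hNbhd_inducedOn_compl_singleton (hu : u ∈ G.hNbhd h v) (hs : G.edist u v = s) :
    (G.inducedOn {v}ᶜ).hNbhd h u =
      G.hNbhd h u \ insert v {w ∈ G.hNbhd (h - s) v |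
        w ≠ u ∧ (h : ℕ∞) < (G.inducedOn (G.hNbhd h v)).edist u w} := by
  have hsv : G.edist v u = s := by rw [edist_comm, hs]
  have huv : u ∈ ({v}ᶜ : Set α) := hu.1
  ext w
  simp only [hNbhd, Set.mem_sdiff, Set.mem_insert_iff, Set.mem_ofPred_eq, not_or, not_and,
    not_lt]
  constructor
  · rintro ⟨hwu, hw⟩
    obtain ⟨p, hph, hpv⟩ := (edist_inducedOn_le_iff huv).1 hw
    refine ⟨⟨hwu, (edist_le p).trans (by exact_mod_cast hph)⟩, hpv w p.end_mem_support,
      fun hwN _ => (edist_inducedOn_le_iff hu).2 ⟨p, hph, fun x hx => ?_⟩⟩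
    exact ⟨hpv x hx, p.edist_le_of_mem_support hph hsv hwN.2 hx⟩
  · rintro ⟨⟨hwu, hw⟩, hwv, hfar⟩
    refine ⟨hwu, ?_⟩
    by_cases hwN : G.edist v w ≤ (h - s : ℕ)
    · exact (edist_anti (inducedOn_mono fun x hx => hx.1)).trans (hfar ⟨hwv, hwN⟩ hwu)
    · obtain ⟨p, hph⟩ := exists_walk_length_le_of_edist_le hw
      refine (edist_inducedOn_le_iff huv).2 ⟨p, hph, fun x hx hxv => ?_⟩
      exact p.notMem_support_of_length_le hph hs (not_le.1 hwN) (hxv ▸ hx)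

end SimpleGraph

theorem stmt7_general (G : SimpleGraph V) (h : ℕ) (v u : V) (s : ℕ)
    (hu : u ∈ G.hNbhd h v) (hs : G.edist u v = (s : ℕ∞)) :
    (G.inducedOn {v}ᶜ).hDeg h u =
      G.hDeg h u - 1 -
        {w ∈ G.hNbhd (h - s) v |
          w ≠ u ∧ (h : ℕ∞) < (G.inducedOn (G.hNbhd h v)).edist u w}.ncard := by
  set B := {w ∈ G.hNbhd (h - s) v |
    w ≠ u ∧ (h : ℕ∞) < (G.inducedOn (G.hNbhd h v)).edist u w}
  have hsh : s ≤ h := by exact_mod_cast (edist_comm (G := G) ▸ hs) ▸ hu.2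
  have hvu : v ∈ G.hNbhd h u :=
    ⟨hu.1.symm, edist_le_of_edist_le_sub hs hsh (by simp)⟩
  have hBu : B ⊆ G.hNbhd h u := fun w hw => ⟨hw.2.1, edist_le_of_edist_le_sub hs hsh hw.1.2⟩
  have hvB : v ∉ B := fun hv => hv.1.1 rfl
  rw [hDeg, hDeg, hNbhd_inducedOn_compl_singleton hu hs,
    Set.ncard_sdiff (Set.insert_subset hvu hBu), Set.ncard_insert_of_notMem hvB]
  omega

/-- The updated `h`-degree of `u` after deleting `v` can be computed on the subgraph
induced by `N_v^h(G)`. -/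
theorem stmt7 (G : SimpleGraph V) (h : ℕ) (hpos : 0 < h) (v u : V) (s : ℕ)
    (hu : u ∈ G.hNbhd h v) (hs : G.edist u v = (s : ℕ∞)) :
    (G.inducedOn {v}ᶜ).hDeg h u =
      G.hDeg h u - 1 -
        {w ∈ G.hNbhd (h - s) v |
          w ≠ u ∧ (h : ℕ∞) < (G.inducedOn (G.hNbhd h v)).edist u w}.ncard :=
  stmt7_general G h v u s hu hs
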